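/- K consists exactly of the maps z ↦ az with a ∈ R; in particular K is a cyclic group of order (p − 1)/2. -/

import Mathlib

instance (X : Type*) [DecidableEq X] : DecidableEq (OnePoint X) :=
  inferInstanceAs (DecidableEq (Option X))

/-- The translation `z ↦ z + a` on `ℤ/p ∪ {∞}`, fixing `∞`. -/
def ptrans (p : ℕ) (a : ZMod p) : Equiv.Perm (OnePoint (ZMod p)) :=
  Equiv.optionCongr (Equiv.addRight a)

/-- The map `z ↦ a z` on `ℤ/p ∪ {∞}`, fixing `∞`, for `a ≠ 0`. -/
def pmul (p : ℕ) [Fact p.Prime] (a : ZMod p) (ha : a ≠ 0) : Equiv.Perm (OnePoint (ZMod p)) :=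
  Equiv.optionCongr (Equiv.mulLeft₀ a ha)

/-- Multiplication by `a` extended to `ℤ/p ∪ {∞}` (with `a·∞ = ∞`). -/
def opSmul (p : ℕ) (a : ZMod p) : OnePoint (ZMod p) → OnePoint (ZMod p) :=
  fun x => Option.map (fun z => a * z) x

/-- Underlying function of the map `z ↦ -1/z`. -/
def negInvFun (p : ℕ) : OnePoint (ZMod p) → OnePoint (ZMod p)
  | Option.none => Option.some (0 : ZMod p)
  | Option.some z => if z = 0 then Option.none else Option.some (-z⁻¹ : ZMod p)

/-- The permutation `z ↦ -1/z` of `ℤ/p ∪ {∞}` (sending `0 ↦ ∞` and `∞ ↦ 0`). -/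
def negInvPerm (p : ℕ) [Fact p.Prime] : Equiv.Perm (OnePoint (ZMod p)) :=
  Function.Involutive.toPerm (negInvFun p) (by
    intro x
    match x with
    | Option.none => (simp [negInvFun]) <;> rfl
    | Option.some z =>
      by_cases hz : z = 0
      · (simp [negInvFun, hz]) <;> rfl
      · have h1 : (-z⁻¹ : ZMod p) ≠ 0 := by simp [hz]
        (simp [negInvFun, hz, h1, inv_neg, inv_inv]) <;> rfl)

/-- The involution `(0 ∞)(1 3)(2 6)(4 5)`. -/
def inv1 (p : ℕ) : Equiv.Perm (OnePoint (ZMod p)) :=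
  Equiv.swap ((0 : ZMod p) : OnePoint (ZMod p)) OnePoint.infty *
  Equiv.swap ((1 : ZMod p) : OnePoint (ZMod p)) ((3 : ZMod p) : OnePoint (ZMod p)) *
  Equiv.swap ((2 : ZMod p) : OnePoint (ZMod p)) ((6 : ZMod p) : OnePoint (ZMod p)) *
  Equiv.swap ((4 : ZMod p) : OnePoint (ZMod p)) ((5 : ZMod p) : OnePoint (ZMod p))

/-- The involution `(0 ∞)(1 5)(2 3)(4 6)`. -/
def inv2 (p : ℕ) : Equiv.Perm (OnePoint (ZMod p)) :=
  Equiv.swap ((0 : ZMod p) : OnePoint (ZMod p)) OnePoint.infty *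
  Equiv.swap ((1 : ZMod p) : OnePoint (ZMod p)) ((5 : ZMod p) : OnePoint (ZMod p)) *
  Equiv.swap ((2 : ZMod p) : OnePoint (ZMod p)) ((3 : ZMod p) : OnePoint (ZMod p)) *
  Equiv.swap ((4 : ZMod p) : OnePoint (ZMod p)) ((6 : ZMod p) : OnePoint (ZMod p))

/-- The set of nonzero squares in `ℤ/p`. -/
def Rset (p : ℕ) : Set (ZMod p) := {a | a ≠ 0 ∧ IsSquare a}

/-- The set of nonsquares in `(ℤ/p)*`. -/
def Nset (p : ℕ) : Set (ZMod p) := {a | a ≠ 0 ∧ ¬ IsSquare a}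

/-- The subgroup of elements of `G` fixing both `0` and `∞`. -/
def Ksub (p : ℕ) (G : Subgroup (Equiv.Perm (OnePoint (ZMod p)))) :
    Subgroup (Equiv.Perm (OnePoint (ZMod p))) :=
  (G ⊓ MulAction.stabilizer (α := OnePoint (ZMod p)) (Equiv.Perm (OnePoint (ZMod p)))
      (OnePoint.some (0 : ZMod p))) ⊓
    MulAction.stabilizer (α := OnePoint (ZMod p)) (Equiv.Perm (OnePoint (ZMod p)))
      OnePoint.infty

/-!
Orbit–stabiliser for the transitive action gives `|G_∞| = p (p - 1) / 2`, and since the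
translations already act transitively on `ℤ/p`, `|K| = (p - 1) / 2`. The translations form a
subgroup of `G_∞` of order `p` and index `(p - 1) / 2 < p`, so by Sylow's theorems it is normal in
`G_∞`. An element `σ ∈ K` therefore conjugates `z ↦ z + 1` to some `z ↦ z + b`, which forces
`σ z = b z`. Thus `K` embeds into the cyclic group `(ℤ/p)ˣ`, where it is the unique subgroup of
order `(p - 1) / 2`: the kernel of `u ↦ u ^ (p / 2)`, i.e. the squares by Euler's criterion.
-/

open MulAction OnePoint

theorem Nat.cube_sub_self_div_two_of_odd {p : ℕ} (hp : Odd p) :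
    (p ^ 3 - p) / 2 = p * ((p - 1) / 2) * (p + 1) := by
  obtain ⟨k, rfl⟩ := hp
  have hk : (2 * k + 1 - 1) / 2 = k := by omega
  have hcube : (2 * k + 1) ^ 3 - (2 * k + 1) = 2 * ((2 * k + 1) * k * (2 * k + 1 + 1)) :=
    Nat.sub_eq_of_eq_add (by ring)
  rw [hk, hcube, Nat.mul_div_cancel_left _ two_pos]

theorem card_onePoint_zmod (p : ℕ) [NeZero p] : Nat.card (OnePoint (ZMod p)) = p + 1 :=
  (Finite.card_option (α := ZMod p)).trans (by rw [Nat.card_zmod])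

theorem Subgroup.card_inf_stabilizer_mul_card_orbit {M X : Type*} [Group M] [MulAction M X]
    (H : Subgroup M) (x : X) :
    Nat.card ↥(H ⊓ stabilizer M x) * Nat.card (orbit H x) = Nat.card H := by
  let e : ↥(H ⊓ stabilizer M x) ≃ stabilizer H x :=
    { toFun g := ⟨⟨g, g.2.1⟩, g.2.2⟩
      invFun g := ⟨g.1, g.1.2, g.2⟩ }
  rw [Nat.card_congr e, mul_comm, ← Nat.card_prod]
  exact Nat.card_congr (orbitProdStabilizerEquivGroup H x)

theorem Subgroup.normal_of_card_eq_prime_of_index_lt {G : Type*} [Group G] [Finite G] {p : ℕ}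
    [Fact p.Prime] {P : Subgroup G} (hP : Nat.card P = p) (hindex : P.index < p) : P.Normal := by
  have hp : p.Prime := Fact.out
  have hindex_pos : 0 < P.index := Nat.pos_of_ne_zero P.index_ne_zero_of_finite
  have hfactor : (Nat.card G).factorization p = 1 := by
    rw [← P.card_mul_index, hP, Nat.factorization_mul hp.ne_zero hindex_pos.ne',
      Finsupp.add_apply, hp.factorization_self,
      Nat.factorization_eq_zero_of_not_dvd fun h => (Nat.le_of_dvd hindex_pos h).not_gt hindex]
  let S : Sylow p G := Sylow.ofCard P (by rw [hP, hfactor, pow_one])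
  have hcard_le : Nat.card (Sylow p G) < p :=
    (Nat.le_of_dvd hindex_pos S.card_dvd_index).trans_lt hindex
  have hcard : Nat.card (Sylow p G) = 1 := by
    have := card_sylow_modEq_one p G
    rwa [Nat.ModEq, Nat.mod_eq_of_lt hcard_le, Nat.mod_eq_of_lt hp.one_lt] at this
  have : Subsingleton (Sylow p G) := (Nat.card_eq_one_iff_unique.mp hcard).1
  exact S.normal_of_subsingleton

theorem ZMod.mem_iff_isSquare_of_card_eq_half {p : ℕ} [Fact p.Prime] {S : Subgroup (ZMod p)ˣ}
    (hS : Nat.card S = p / 2) (u : (ZMod p)ˣ) : u ∈ S ↔ IsSquare (u : ZMod p) := by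
  have hker : S = (powMonoidHom (p / 2) : (ZMod p)ˣ →* (ZMod p)ˣ).ker := by
    refine Subgroup.eq_of_le_of_card_ge (fun v hv => ?_) ?_
    · have := congrArg Subtype.val (pow_card_eq_one' (G := S) (x := ⟨v, hv⟩))
      rwa [hS] at this
    · rw [IsCyclic.card_powMonoidHom_ker, Nat.card_eq_fintype_card, ZMod.card_units, hS]
      exact Nat.gcd_le_right _ (Nat.div_pos (Fact.out : p.Prime).two_le two_pos)
  rw [hker, MonoidHom.mem_ker, powMonoidHom_apply, ZMod.euler_criterion p u.ne_zero, Units.ext_iff,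
    Units.val_pow_eq_pow_val, Units.val_one]

section Translations

variable {p : ℕ}

@[simp]
theorem ptrans_apply_coe (a z : ZMod p) : ptrans p a z = ↑(z + a) := rfl

@[simp]
theorem ptrans_apply_infty (a : ZMod p) : ptrans p a ∞ = ∞ := rfl

def ptransHom (p : ℕ) : Multiplicative (ZMod p) →* Equiv.Perm (OnePoint (ZMod p)) where
  toFun a := ptrans p a.toAdd
  map_one' := by ext x; cases x <;> simp
  map_mul' a b := by ext x; cases x <;> simp [add_comm, add_left_comm]

theorem ptransHom_injective : Function.Injective (ptransHom p) := fun a b hab => by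
  simpa [ptransHom] using congrArg (· ((0 : ZMod p) : OnePoint (ZMod p))) hab

theorem card_range_ptransHom [NeZero p] : Nat.card (ptransHom p).range = p := by
  rw [MonoidHom.range_eq_map, Subgroup.card_map_of_injective ptransHom_injective,
    Subgroup.card_top]
  exact Nat.card_zmod p

theorem apply_coe_eq_mul_of_mul_ptrans_eq [NeZero p] {σ : Equiv.Perm (OnePoint (ZMod p))}
    {b : ZMod p} (h0 : σ (0 : ZMod p) = (0 : ZMod p)) (hσ : σ * ptrans p 1 = ptrans p b * σ)
    (z : ZMod p) : σ z = ↑(z * b) := by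
  suffices h : ∀ n : ℕ, σ (n : ZMod p) = ↑((n : ZMod p) * b) by
    simpa using h z.val
  intro n
  induction n with
  | zero => simpa using h0
  | succ n ih =>
    have := congrArg (· ((n : ZMod p) : OnePoint (ZMod p))) hσ
    simp only [Equiv.Perm.mul_apply, ptrans_apply_coe, ih] at this
    rw [Nat.cast_succ, this, add_one_mul]

end Translations

section Multiplications

variable {p : ℕ} [Fact p.Prime]

@[simp]
theorem pmul_apply_coe (a z : ZMod p) (ha : a ≠ 0) : pmul p a ha z = ↑(a * z) := rfl

@[simp]
theorem pmul_apply_infty (a : ZMod p) (ha : a ≠ 0) :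
    pmul p a ha ∞ = ∞ := rfl

def pmulHom (p : ℕ) [Fact p.Prime] : (ZMod p)ˣ →* Equiv.Perm (OnePoint (ZMod p)) where
  toFun u := pmul p u u.ne_zero
  map_one' := by ext x; cases x <;> simp
  map_mul' u v := by ext x; cases x <;> simp [mul_assoc]

theorem pmulHom_apply (u : (ZMod p)ˣ) : pmulHom p u = pmul p u u.ne_zero := rfl

theorem pmulHom_injective : Function.Injective (pmulHom p) := fun u v huv => by
  simpa [pmulHom_apply, Units.ext_iff] using congrArg (· ((1 : ZMod p) : OnePoint (ZMod p))) huv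

theorem mem_range_pmulHom_of_mul_ptrans_eq {σ : Equiv.Perm (OnePoint (ZMod p))} {b : ZMod p}
    (h0 : σ (0 : ZMod p) = (0 : ZMod p)) (hinf : σ ∞ = ∞)
    (hσ : σ * ptrans p 1 = ptrans p b * σ) : σ ∈ (pmulHom p).range := by
  have hσ_apply := apply_coe_eq_mul_of_mul_ptrans_eq h0 hσ
  have hb : b ≠ 0 := by
    rintro rfl
    have h10 : σ (1 : ZMod p) = σ (0 : ZMod p) := by simp [hσ_apply]
    simpa using σ.injective h10
  refine ⟨Units.mk0 b hb, Equiv.ext fun x => ?_⟩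
  cases x with
  | infty => exact hinf.symm
  | coe z => simp [pmulHom_apply, hσ_apply, mul_comm]

end Multiplications

section PointStabilizers

variable {p : ℕ} [Fact p.Prime] {G : Subgroup (Equiv.Perm (OnePoint (ZMod p)))}

theorem card_inf_stabilizer_infty (hp2 : p ≠ 2)
    (htrans : ∀ x y : OnePoint (ZMod p), ∃ g ∈ G, g x = y)
    (hcard : Nat.card G = (p ^ 3 - p) / 2) :
    Nat.card ↥(G ⊓ stabilizer (Equiv.Perm (OnePoint (ZMod p))) (∞ : OnePoint (ZMod p))) =
      p * ((p - 1) / 2) := by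
  have : IsPretransitive G (OnePoint (ZMod p)) :=
    ⟨fun x y => let ⟨g, hg, hgx⟩ := htrans x y; ⟨⟨g, hg⟩, hgx⟩⟩
  have h := G.card_inf_stabilizer_mul_card_orbit (∞ : OnePoint (ZMod p))
  rw [orbit_eq_univ, Nat.card_univ, card_onePoint_zmod, hcard,
    Nat.cube_sub_self_div_two_of_odd ((Fact.out : p.Prime).odd_of_ne_two hp2)] at h
  exact Nat.eq_of_mul_eq_mul_right (Nat.succ_pos p) h

theorem orbit_zero_inf_stabilizer_infty (htransl : ∀ a : ZMod p, ptrans p a ∈ G) :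
    orbit ↥(G ⊓ stabilizer (Equiv.Perm (OnePoint (ZMod p))) (∞ : OnePoint (ZMod p)))
      ((0 : ZMod p) : OnePoint (ZMod p)) = Set.range ((↑) : ZMod p → OnePoint (ZMod p)) := by
  ext y
  constructor
  · rintro ⟨⟨g, -, hg⟩, rfl⟩
    cases hy : g (0 : ZMod p) with
    | infty => exact absurd (g.injective (hy.trans (Eq.symm hg))) (coe_ne_infty _)
    | coe z => exact ⟨z, hy.symm⟩
  · rintro ⟨z, rfl⟩
    refine ⟨⟨ptrans p z, htransl z, rfl⟩, ?_⟩
    show ptrans p z ((0 : ZMod p) : OnePoint (ZMod p)) = z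
    simp

theorem card_Ksub (hp2 : p ≠ 2)
    (htrans : ∀ x y : OnePoint (ZMod p), ∃ g ∈ G, g x = y)
    (hcard : Nat.card G = (p ^ 3 - p) / 2)
    (htransl : ∀ a : ZMod p, ptrans p a ∈ G) :
    Nat.card (Ksub p G) = (p - 1) / 2 := by
  have h := (G ⊓ stabilizer (Equiv.Perm (OnePoint (ZMod p))) (∞ : OnePoint (ZMod p)))
    |>.card_inf_stabilizer_mul_card_orbit ((0 : ZMod p) : OnePoint (ZMod p))
  rw [orbit_zero_inf_stabilizer_infty htransl, Nat.card_range_of_injective coe_injective,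
    Nat.card_zmod, card_inf_stabilizer_infty hp2 htrans hcard, inf_right_comm] at h
  exact Nat.eq_of_mul_eq_mul_right (Fact.out : p.Prime).pos (h.trans (mul_comm _ _))

theorem Ksub_le_range_pmulHom (hp2 : p ≠ 2)
    (htrans : ∀ x y : OnePoint (ZMod p), ∃ g ∈ G, g x = y)
    (hcard : Nat.card G = (p ^ 3 - p) / 2)
    (htransl : ∀ a : ZMod p, ptrans p a ∈ G) :
    Ksub p G ≤ (pmulHom p).range := by
  have hp : p.Prime := Fact.out
  set H := G ⊓ stabilizer (Equiv.Perm (OnePoint (ZMod p))) (∞ : OnePoint (ZMod p))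
  set T := (ptransHom p).range
  have hTH : T ≤ H := by
    rintro _ ⟨a, rfl⟩
    exact ⟨htransl _, rfl⟩
  have hT : Nat.card (T.subgroupOf H) = p :=
    (Nat.card_congr (Subgroup.subgroupOfEquivOfLe hTH).toEquiv).trans card_range_ptransHom
  have hindex : (T.subgroupOf H).index < p := by
    have h := (T.subgroupOf H).card_mul_index
    rw [hT, card_inf_stabilizer_infty hp2 htrans hcard] at h
    rw [Nat.eq_of_mul_eq_mul_left hp.pos h]
    exact (Nat.div_le_self _ _).trans_lt (Nat.sub_lt hp.pos one_pos)
  have hnormalizer : H ≤ Subgroup.normalizer (T : Set (Equiv.Perm (OnePoint (ZMod p)))) :=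
    (Subgroup.normal_subgroupOf_iff_le_normalizer hTH).mp
      (Subgroup.normal_of_card_eq_prime_of_index_lt hT hindex)
  intro σ hσ
  obtain ⟨b, hb⟩ : σ * ptrans p 1 * σ⁻¹ ∈ T :=
    (Subgroup.mem_normalizer_iff.mp (hnormalizer ⟨hσ.1.1, hσ.2⟩) _).mp ⟨Multiplicative.ofAdd 1, rfl⟩
  exact mem_range_pmulHom_of_mul_ptrans_eq hσ.1.2 hσ.2 (mul_inv_eq_iff_eq_mul.mp hb.symm)

end PointStabilizers

theorem K_is_cyclic_of_mult_maps
    (p : ℕ) [Fact p.Prime] (hp2 : p ≠ 2)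
    (G : Subgroup (Equiv.Perm (OnePoint (ZMod p))))
    (htrans : ∀ x y : OnePoint (ZMod p), ∃ g ∈ G, g x = y)
    (hcard : Nat.card G = (p ^ 3 - p) / 2)
    (htransl : ∀ a : ZMod p, ptrans p a ∈ G) :
    (∀ σ : Equiv.Perm (OnePoint (ZMod p)),
        σ ∈ Ksub p G ↔ ∃ (a : ZMod p) (ha : a ≠ 0), IsSquare a ∧ σ = pmul p a ha) ∧
      IsCyclic (Ksub p G) ∧ Nat.card (Ksub p G) = (p - 1) / 2 := by
  set S := (Ksub p G).comap (pmulHom p)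
  have hK : Nat.card (Ksub p G) = (p - 1) / 2 := card_Ksub hp2 htrans hcard htransl
  have hSK : S.map (pmulHom p) = Ksub p G :=
    Subgroup.map_comap_eq_self (Ksub_le_range_pmulHom hp2 htrans hcard htransl)
  have hS : Nat.card S = p / 2 := by
    obtain ⟨k, rfl⟩ := (Fact.out : p.Prime).odd_of_ne_two hp2
    rw [← Subgroup.card_map_of_injective pmulHom_injective, hSK, hK]
    omega
  have hsquare := ZMod.mem_iff_isSquare_of_card_eq_half hS
  refine ⟨fun σ => ⟨fun hσ => ?_, ?_⟩, ?_, hK⟩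
  · obtain ⟨u, hu, rfl⟩ := Subgroup.mem_map.mp (hSK ▸ hσ)
    exact ⟨u, u.ne_zero, (hsquare u).mp hu, rfl⟩
  · rintro ⟨a, ha, hsq, rfl⟩
    exact (hsquare (Units.mk0 a ha)).mpr hsq
  · rw [← hSK]
    exact isCyclic_of_surjective _ (S.equivMapOfInjective _ pmulHom_injective).surjective
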